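/- Let 𝒴 ⊆ ℂⁿ be a p-dimensional subspace, let i ∈ {1, …, p} and t ∈ {i, …, n−p+i−1}, assume the i-th largest Ritz value η_i of A in 𝒴 satisfies η_i > λ_{t+1}, and let f : ℝ → ℝ satisfy |f(λ₁)| ≥ ⋯ ≥ |f(λ_t)| > max_{j ∈ {t+1, …, n}} |f(λⱼ)|. Then 𝒴' = f(A)𝒴 has dimension at least i, and the i-th largest Ritz value η'_i of A in 𝒴' satisfies: either η'_i ≥ λ_t, or 0 < (λ_t − η'_i)/(η'_i − λ_{t+1}) ≤ ((max_{j ∈ {t+1, …, n}} |f(λⱼ)|)² / |f(λ_t)|²) · (λ_t − η_i)/(η_i − λ_{t+1}). -/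

import Mathlib

/-!
In the eigenbasis, the Rayleigh quotient of `v` is the mean of the `λⱼ` weighted by
`wⱼ = |⟨xⱼ, v⟩|²`, and `f(A)` replaces `wⱼ` by `f(λⱼ)² wⱼ`. The gap `[λ_{t+1}, λ_t]` splits
the spectrum into a head, where `f(λⱼ)² ≥ |f(λ_t)|²`, and a tail, where `f(λⱼ)² ≤ ν_t²`.
Comparing termwise with `∑ wⱼ (λⱼ - r) ≥ 0` shows that `ρ(v) ≥ r > λ_{t+1}` forces
`f(A)v ≠ 0` and `|f(λ_t)|² (r - λ_{t+1}) (λ_t - ρ(f(A)v)) ≤ ν_t² (λ_t - r) (ρ(f(A)v) - λ_{t+1})`.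
By max-min, for every `r < η_i` some `i`-dimensional `T ≤ 𝒴` has `ρ ≥ r` on it; then `f(A)T` is
`i`-dimensional and lies in `𝒴'`, so `η'_i` obeys the same bound, and `r ↑ η_i` gives the claim.
-/

/-- The Rayleigh quotient `ρ(v) = (vᴴAv)/(vᴴv)` of the Hermitian matrix `A`. -/
noncomputable def rayleigh {n : ℕ} (A : Matrix (Fin n) (Fin n) ℂ)
    (v : EuclideanSpace ℂ (Fin n)) : ℝ :=
  ((inner ℂ v (Matrix.toEuclideanLin A v) : ℂ)).re / ‖v‖ ^ 2

/-- The `i`-th largest Ritz value (1-indexed, `i ∈ {1, …, dim S}`) of the Hermitian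
matrix `A` in the subspace `S`, characterized via the Courant–Fischer max-min
principle applied inside `S` (equivalently, the `i`-th largest eigenvalue of
`SᴴAS` for any orthonormal basis matrix `S`). -/
noncomputable def ritzValue {n : ℕ} (A : Matrix (Fin n) (Fin n) ℂ)
    (S : Submodule ℂ (EuclideanSpace ℂ (Fin n))) (i : ℕ) : ℝ :=
  sSup {r : ℝ | ∃ T : Submodule ℂ (EuclideanSpace ℂ (Fin n)), T ≤ S ∧
    Module.finrank ℂ T = i ∧ ∀ v ∈ T, v ≠ 0 → r ≤ rayleigh A v}

/-- `f(A) = ∑ j, f(λ_j) x_j x_jᴴ` as a linear operator, for eigenvalues `lam`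
and orthonormal eigenvectors `x` of `A`. -/
noncomputable def matFun {n : ℕ} (lam : Fin n → ℝ)
    (x : Fin n → EuclideanSpace ℂ (Fin n)) (f : ℝ → ℝ) :
    EuclideanSpace ℂ (Fin n) →ₗ[ℂ] EuclideanSpace ℂ (Fin n) :=
  ∑ j : Fin n, (f (lam j) : ℂ) • ((innerSL ℂ (x j)).toLinearMap.smulRight (x j))

/-- `y` is a Ritz vector of `A` in `S` associated with the Ritz value `η`:
`y ∈ S`, `y ≠ 0`, `ρ(y) = η` and `Ay − ηy ⊥ S`. -/
def IsRitzVector {n : ℕ} (A : Matrix (Fin n) (Fin n) ℂ)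
    (S : Submodule ℂ (EuclideanSpace ℂ (Fin n))) (η : ℝ)
    (y : EuclideanSpace ℂ (Fin n)) : Prop :=
  y ∈ S ∧ y ≠ 0 ∧ rayleigh A y = η ∧
    ∀ v ∈ S, (inner ℂ v (Matrix.toEuclideanLin A y - (η : ℂ) • y) : ℂ) = 0

open Module

section Spectral

variable {𝕜 ι E : Type*} [RCLike 𝕜] [Fintype ι] [NormedAddCommGroup E] [InnerProductSpace 𝕜 E]

theorem Orthonormal.exists_orthonormalBasis_coe_eq [FiniteDimensional 𝕜 E] {x : ι → E}
    (hx : Orthonormal 𝕜 x) (hcard : Fintype.card ι = finrank 𝕜 E) :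
    ∃ e : OrthonormalBasis ι 𝕜 E, ⇑e = x :=
  ⟨.mk hx (hx.linearIndependent.span_eq_top_of_card_eq_finrank' hcard).ge,
    OrthonormalBasis.coe_mk _ _⟩

theorem OrthonormalBasis.inner_map_of_apply_eq (e : OrthonormalBasis ι 𝕜 E) {T : E →ₗ[𝕜] E}
    {μ : ι → 𝕜} (hT : ∀ j, T (e j) = μ j • e j) (i : ι) (v : E) :
    inner 𝕜 (e i) (T v) = μ i * inner 𝕜 (e i) v := by
  conv_lhs => rw [← e.sum_repr' v]
  simp only [map_sum, map_smul, hT, smul_smul]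
  rw [e.orthonormal.inner_right_fintype]
  ring

theorem OrthonormalBasis.re_inner_map_eq_sum (e : OrthonormalBasis ι 𝕜 E) {T : E →ₗ[𝕜] E}
    {μ : ι → ℝ} (hT : ∀ j, T (e j) = (μ j : 𝕜) • e j) (v : E) :
    RCLike.re (inner 𝕜 v (T v)) = ∑ j, ‖inner 𝕜 (e j) v‖ ^ 2 * μ j := by
  rw [← e.sum_inner_mul_inner, map_sum]
  refine Finset.sum_congr rfl fun j _ => ?_
  rw [e.inner_map_of_apply_eq hT, ← inner_conj_symm, mul_left_comm, RCLike.conj_mul, mul_comm]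
  norm_cast

end Spectral

theorem matFun_apply_of_orthonormal {n : ℕ} (lam : Fin n → ℝ)
    {x : Fin n → EuclideanSpace ℂ (Fin n)} (hx : Orthonormal ℂ x) (f : ℝ → ℝ) (k : Fin n) :
    matFun lam x f (x k) = (f (lam k) : ℂ) • x k := by
  simp [matFun, orthonormal_iff_ite.mp hx]

section EigenExpansion

variable {n : ℕ} {A : Matrix (Fin n) (Fin n) ℂ} {lam : Fin n → ℝ}
  {e : OrthonormalBasis (Fin n) ℂ (EuclideanSpace ℂ (Fin n))}

theorem sum_norm_inner_sq_mul_sub_eq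
    (heig : ∀ j, Matrix.toEuclideanLin A (e j) = (lam j : ℂ) • e j)
    (v : EuclideanSpace ℂ (Fin n)) (r : ℝ) :
    ∑ j, ‖inner ℂ (e j) v‖ ^ 2 * (lam j - r) = ‖v‖ ^ 2 * (rayleigh A v - r) := by
  have hre := e.re_inner_map_eq_sum heig v
  simp only [RCLike.re_to_complex] at hre
  simp only [mul_sub, Finset.sum_sub_distrib, ← Finset.sum_mul, e.sum_sq_norm_inner_right]
  rcases eq_or_ne v 0 with rfl | hv
  · simp
  rw [rayleigh, mul_div_cancel₀ _ (by positivity), hre]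

theorem le_rayleigh_iff
    (heig : ∀ j, Matrix.toEuclideanLin A (e j) = (lam j : ℂ) • e j)
    {v : EuclideanSpace ℂ (Fin n)} (hv : v ≠ 0) {r : ℝ} :
    r ≤ rayleigh A v ↔ 0 ≤ ∑ j, ‖inner ℂ (e j) v‖ ^ 2 * (lam j - r) := by
  rw [sum_norm_inner_sq_mul_sub_eq heig, mul_nonneg_iff_of_pos_left (by positivity), sub_nonneg]

theorem norm_inner_matFun_sq (f : ℝ → ℝ) (j : Fin n) (v : EuclideanSpace ℂ (Fin n)) :
    ‖inner ℂ (e j) (matFun lam e f v)‖ ^ 2 = f (lam j) ^ 2 * ‖inner ℂ (e j) v‖ ^ 2 := by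
  rw [e.inner_map_of_apply_eq (matFun_apply_of_orthonormal lam e.orthonormal f), norm_mul,
    Complex.norm_real, Real.norm_eq_abs, mul_pow, sq_abs]

end EigenExpansion

section GapWeights

variable {a b m M : ℝ}

theorem mul_sub_le_mul_sub_of_gap (hm : m ≤ M) {c : ℝ} (hbc : b ≤ c) (hca : c ≤ a) {μ φ : ℝ}
    (h : (a ≤ μ ∧ M ≤ φ) ∨ (μ ≤ b ∧ φ ≤ m)) : M * (μ - c) ≤ φ * (μ - c) := by
  rcases h with ⟨hμ, hφ⟩ | ⟨hμ, hφ⟩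
  · exact mul_le_mul_of_nonneg_right hφ (by linarith)
  · exact mul_le_mul_of_nonpos_right (by linarith) (by linarith)

-- Both sides are affine in `μ`; they agree at `μ = a` on the head and at `μ = b` on the tail.
theorem mul_sub_le_mul_cross_of_gap (hm0 : 0 ≤ m) (hm : m ≤ M) {r : ℝ} (hbr : b ≤ r) (hra : r ≤ a)
    {μ φ : ℝ} (h : (a ≤ μ ∧ M ≤ φ) ∨ (μ ≤ b ∧ φ ≤ m)) :
    M * m * (a - b) * (μ - r) ≤ φ * (M * (r - b) * (μ - a) + m * (a - r) * (μ - b)) := by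
  have hM : 0 ≤ M := hm0.trans hm
  have hMm := sub_nonneg.2 hm
  have hrb := sub_nonneg.2 hbr
  have har := sub_nonneg.2 hra
  rcases h with ⟨hμ, hφ⟩ | ⟨hμ, hφ⟩
  · have hμa := sub_nonneg.2 hμ
    have hμb : 0 ≤ μ - b := by linarith
    calc M * m * (a - b) * (μ - r)
        = M * (M * (r - b) * (μ - a) + m * (a - r) * (μ - b))
            - M * (M - m) * (r - b) * (μ - a) := by ring
      _ ≤ M * (M * (r - b) * (μ - a) + m * (a - r) * (μ - b)) := sub_le_self _ (by positivity)
      _ ≤ _ := mul_le_mul_of_nonneg_right hφ (by positivity)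
  · have hbμ := sub_nonneg.2 hμ
    have haμ : 0 ≤ a - μ := by linarith
    calc M * m * (a - b) * (μ - r)
        = m * (M * (r - b) * (μ - a) + m * (a - r) * (μ - b))
            - m * (M - m) * (a - r) * (b - μ) := by ring
      _ ≤ m * (M * (r - b) * (μ - a) + m * (a - r) * (μ - b)) := sub_le_self _ (by positivity)
      _ ≤ _ := by
        refine mul_le_mul_of_nonpos_right hφ ?_
        linarith [mul_nonneg (mul_nonneg hM hrb) haμ, mul_nonneg (mul_nonneg hm0 har) hbμ]

variable {ι : Type*} [Fintype ι] {μ w φ : ι → ℝ}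
  (hgap : ∀ j, (a ≤ μ j ∧ M ≤ φ j) ∨ (μ j ≤ b ∧ φ j ≤ m)) (hw : ∀ j, 0 ≤ w j)
include hgap hw

theorem mul_sum_le_sum_mul_of_gap (hm : m ≤ M) {c : ℝ} (hbc : b ≤ c) (hca : c ≤ a) :
    M * ∑ j, w j * (μ j - c) ≤ ∑ j, φ j * w j * (μ j - c) := by
  rw [Finset.mul_sum]
  refine Finset.sum_le_sum fun j _ => ?_
  have := mul_le_mul_of_nonneg_left (mul_sub_le_mul_sub_of_gap hm hbc hca (hgap j)) (hw j)
  linarith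

theorem sum_cross_nonneg_of_gap (hm0 : 0 ≤ m) (hm : m ≤ M) {r : ℝ} (hbr : b ≤ r) (hra : r ≤ a)
    (hr : 0 ≤ ∑ j, w j * (μ j - r)) :
    0 ≤ M * (r - b) * ∑ j, φ j * w j * (μ j - a) + m * (a - r) * ∑ j, φ j * w j * (μ j - b) := by
  have hab : 0 ≤ M * m * (a - b) := mul_nonneg (mul_nonneg (hm0.trans hm) hm0) (by linarith)
  calc 0 ≤ M * m * (a - b) * ∑ j, w j * (μ j - r) := mul_nonneg hab hr
    _ ≤ _ := by
      simp only [Finset.mul_sum, ← Finset.sum_add_distrib]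
      refine Finset.sum_le_sum fun j _ => ?_
      have := mul_le_mul_of_nonneg_left
        (mul_sub_le_mul_cross_of_gap hm0 hm hbr hra (hgap j)) (hw j)
      linarith

end GapWeights

theorem Submodule.exists_le_finrank_eq {K V : Type*} [DivisionRing K] [AddCommGroup V] [Module K V]
    (S : Submodule K V) [FiniteDimensional K S] {i : ℕ} (hi : i ≤ finrank K S) :
    ∃ T ≤ S, finrank K T = i := by
  obtain ⟨g, hg⟩ := exists_linearIndependent_of_le_finrank hi
  refine ⟨Submodule.span K (Set.range (S.subtype ∘ g)), ?_, ?_⟩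
  · rw [Submodule.span_le, Set.range_comp]
    rintro _ ⟨_, _, rfl⟩
    exact Subtype.coe_prop _
  · rw [finrank_span_eq_card (hg.map' S.subtype S.ker_subtype), Fintype.card_fin]

theorem abs_rayleigh_le {n : ℕ} (A : Matrix (Fin n) (Fin n) ℂ) (v : EuclideanSpace ℂ (Fin n)) :
    |rayleigh A v| ≤ ‖Matrix.toEuclideanCLM (n := Fin n) (𝕜 := ℂ) A‖ := by
  rcases eq_or_ne v 0 with rfl | hv
  · simp [rayleigh]
  have hv2 : 0 < ‖v‖ ^ 2 := by positivity
  rw [rayleigh, abs_div, abs_of_pos hv2, div_le_iff₀ hv2]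
  calc |(inner ℂ v (Matrix.toEuclideanLin A v)).re|
      ≤ ‖v‖ * ‖Matrix.toEuclideanCLM (n := Fin n) (𝕜 := ℂ) A v‖ :=
        (Complex.abs_re_le_norm _).trans (norm_inner_le_norm _ _)
    _ ≤ ‖v‖ * (‖Matrix.toEuclideanCLM (n := Fin n) (𝕜 := ℂ) A‖ * ‖v‖) := by
        gcongr; exact ContinuousLinearMap.le_opNorm _ _
    _ = _ := by ring

section Ritz

variable {n : ℕ} (A : Matrix (Fin n) (Fin n) ℂ) {S : Submodule ℂ (EuclideanSpace ℂ (Fin n))}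
  {i : ℕ} {r : ℝ}

theorem le_ritzValue (hi : 1 ≤ i) {T : Submodule ℂ (EuclideanSpace ℂ (Fin n))} (hTS : T ≤ S)
    (hT : finrank ℂ T = i) (hr : ∀ v ∈ T, v ≠ 0 → r ≤ rayleigh A v) : r ≤ ritzValue A S i := by
  refine le_csSup ⟨‖Matrix.toEuclideanCLM (n := Fin n) (𝕜 := ℂ) A‖, ?_⟩ ⟨T, hTS, hT, hr⟩
  rintro s ⟨U, -, hU, hs⟩
  obtain ⟨v, hvU, hv⟩ := Submodule.exists_mem_ne_zero_of_ne_bot (p := U) (by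
    rintro rfl
    rw [finrank_bot] at hU
    omega)
  exact (hs v hvU hv).trans ((le_abs_self _).trans (abs_rayleigh_le A v))

theorem exists_le_rayleigh_of_lt_ritzValue (hiS : i ≤ finrank ℂ S) (hr : r < ritzValue A S i) :
    ∃ T ≤ S, finrank ℂ T = i ∧ ∀ v ∈ T, v ≠ 0 → r ≤ rayleigh A v := by
  obtain ⟨T, hTS, hT⟩ := S.exists_le_finrank_eq hiS
  have hne : ∃ s, ∃ T ≤ S, finrank ℂ T = i ∧ ∀ v ∈ T, v ≠ 0 → s ≤ rayleigh A v :=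
    ⟨_, T, hTS, hT, fun v _ _ => neg_le_of_abs_le (abs_rayleigh_le A v)⟩
  obtain ⟨s, ⟨T, hTS, hT, hs⟩, hrs⟩ := exists_lt_of_lt_csSup hne hr
  exact ⟨T, hTS, hT, fun v hvT hv => hrs.le.trans (hs v hvT hv)⟩

theorem le_ritzValue_map (hi : 1 ≤ i) (hiS : i ≤ finrank ℂ S) (hr : r < ritzValue A S i)
    {L : EuclideanSpace ℂ (Fin n) →ₗ[ℂ] EuclideanSpace ℂ (Fin n)} {q : ℝ}
    (hL : ∀ v, v ≠ 0 → r ≤ rayleigh A v → L v ≠ 0 ∧ q ≤ rayleigh A (L v)) :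
    i ≤ finrank ℂ (S.map L) ∧ q ≤ ritzValue A (S.map L) i := by
  obtain ⟨T, hTS, hT, hrT⟩ := exists_le_rayleigh_of_lt_ritzValue A hiS hr
  have hinj : Function.Injective (L.domRestrict T) := by
    rw [← LinearMap.ker_eq_bot, Submodule.eq_bot_iff]
    rintro ⟨v, hvT⟩ hLv
    by_contra hv
    exact (hL v (by simpa using hv) (hrT v hvT (by simpa using hv))).1 hLv
  have hLT : finrank ℂ (T.map L) = i := by
    rw [← LinearMap.range_domRestrict, LinearMap.finrank_range_of_inj hinj, hT]
  refine ⟨hLT ▸ Submodule.finrank_mono (Submodule.map_mono hTS), le_ritzValue A hi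
    (Submodule.map_mono hTS) hLT ?_⟩
  rintro _ ⟨v, hvT, rfl⟩ hLv
  have hv : v ≠ 0 := by rintro rfl; simp at hLv
  exact (hL v hv (hrT v hvT hv)).2

end Ritz

-- With `M = |f(λ_t)|²`, `m = ν_t²` and the gap `[b, a]`: the lower bound on `ρ(f(A)v)` given
-- `ρ(v) ≥ r`, a mean of `a` and `b` with weights `M (r - b)` and `m (a - r)`.
noncomputable def ritzLowerBound (m M a b r : ℝ) : ℝ :=
  (M * (r - b) * a + m * (a - r) * b) / (M * (r - b) + m * (a - r))

section RitzLowerBound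

variable {m M a b : ℝ}

theorem ritzLowerBound_denom_pos (hM : 0 < M) (hm0 : 0 ≤ m) {r : ℝ} (hbr : b < r) (hra : r ≤ a) :
    0 < M * (r - b) + m * (a - r) :=
  add_pos_of_pos_of_nonneg (mul_pos hM (sub_pos.2 hbr)) (mul_nonneg hm0 (sub_nonneg.2 hra))

theorem ritzLowerBound_le_iff {r y : ℝ} (hD : 0 < M * (r - b) + m * (a - r)) :
    ritzLowerBound m M a b r ≤ y ↔ 0 ≤ M * (r - b) * (y - a) + m * (a - r) * (y - b) := by
  rw [ritzLowerBound, div_le_iff₀ hD]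
  constructor <;> intro h <;> linarith

theorem ritzLowerBound_le_of_forall_lt (hM : 0 < M) (hm0 : 0 ≤ m) {η y : ℝ} (hbη : b < η)
    (hηa : η ≤ a) (h : ∀ s, b < s → s < η → ritzLowerBound m M a b s ≤ y) :
    ritzLowerBound m M a b η ≤ y := by
  have hcont : ContinuousAt (ritzLowerBound m M a b) η :=
    ContinuousAt.div (by fun_prop) (by fun_prop) (ritzLowerBound_denom_pos hM hm0 hbη hηa).ne'
  refine le_of_tendsto (hcont.tendsto.mono_left (nhdsWithin_le_nhds (s := Set.Iio η))) ?_
  filter_upwards [Ioo_mem_nhdsLT hbη] with s hs using h s hs.1 hs.2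

theorem ratio_le_of_ritzLowerBound_le (hm0 : 0 ≤ m) (hmM : m < M) {η y : ℝ} (hbη : b < η)
    (hηa : η ≤ a) (h : ritzLowerBound m M a b η ≤ y) :
    a ≤ y ∨ (0 < (a - y) / (y - b) ∧ (a - y) / (y - b) ≤ m / M * ((a - η) / (η - b))) := by
  have hM : 0 < M := hm0.trans_lt hmM
  rw [ritzLowerBound_le_iff (ritzLowerBound_denom_pos hM hm0 hbη hηa)] at h
  rcases le_or_gt a y with hay | hya
  · exact Or.inl hay
  have hby : b < y := by
    by_contra! hyb
    nlinarith [mul_pos (mul_pos hM (sub_pos.2 hbη)) (sub_pos.2 hya),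
      mul_nonneg (mul_nonneg hm0 (sub_nonneg.2 hηa)) (sub_nonneg.2 hyb)]
  refine Or.inr ⟨div_pos (sub_pos.2 hya) (sub_pos.2 hby), ?_⟩
  rw [div_mul_div_comm, div_le_div_iff₀ (sub_pos.2 hby) (mul_pos hM (sub_pos.2 hbη))]
  linarith

end RitzLowerBound

section MatFun

variable {n : ℕ} {A : Matrix (Fin n) (Fin n) ℂ} {lam : Fin n → ℝ}
  {e : OrthonormalBasis (Fin n) ℂ (EuclideanSpace ℂ (Fin n))}
  (heig : ∀ j, Matrix.toEuclideanLin A (e j) = (lam j : ℂ) • e j)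
  {f : ℝ → ℝ} {a b m M : ℝ}
  (hgap : ∀ j, (a ≤ lam j ∧ M ≤ f (lam j) ^ 2) ∨ (lam j ≤ b ∧ f (lam j) ^ 2 ≤ m))
  {v : EuclideanSpace ℂ (Fin n)}
include heig hgap

theorem mul_rayleigh_sub_le_matFun (hm : m ≤ M) {c : ℝ} (hbc : b ≤ c) (hca : c ≤ a) :
    M * (‖v‖ ^ 2 * (rayleigh A v - c)) ≤
      ‖matFun lam e f v‖ ^ 2 * (rayleigh A (matFun lam e f v) - c) := by
  have := mul_sum_le_sum_mul_of_gap hgap (fun j => sq_nonneg ‖inner ℂ (e j) v‖) hm hbc hca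
  simpa only [← norm_inner_matFun_sq, sum_norm_inner_sq_mul_sub_eq heig] using this

theorem matFun_ne_zero (hM : 0 < M) (hm : m ≤ M) (hba : b ≤ a) (hv : v ≠ 0)
    (hb : b < rayleigh A v) : matFun lam e f v ≠ 0 := by
  intro hw
  have := mul_rayleigh_sub_le_matFun heig hgap hm le_rfl hba (v := v)
  rw [hw, norm_zero] at this
  have : 0 < M * (‖v‖ ^ 2 * (rayleigh A v - b)) := by
    have := sub_pos.2 hb
    positivity
  linarith

theorem matFun_ne_zero_and_le_rayleigh (hM : 0 < M) (hm : m ≤ M) (hba : b ≤ a) (hv : v ≠ 0)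
    (ha : a < rayleigh A v) :
    matFun lam e f v ≠ 0 ∧ a ≤ rayleigh A (matFun lam e f v) := by
  have hw := matFun_ne_zero heig hgap hM hm hba hv (hba.trans_lt ha)
  have hv : 0 ≤ M * (‖v‖ ^ 2 * (rayleigh A v - a)) := by
    have := sub_nonneg.2 ha.le
    positivity
  have hw' := hv.trans (mul_rayleigh_sub_le_matFun heig hgap hm hba le_rfl)
  exact ⟨hw, sub_nonneg.1 ((mul_nonneg_iff_of_pos_left (by positivity)).1 hw')⟩

theorem matFun_ne_zero_and_ritzLowerBound_le (hM : 0 < M) (hm0 : 0 ≤ m) (hm : m ≤ M) {r : ℝ}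
    (hbr : b < r) (hra : r ≤ a) (hv : v ≠ 0) (hr : r ≤ rayleigh A v) :
    matFun lam e f v ≠ 0 ∧ ritzLowerBound m M a b r ≤ rayleigh A (matFun lam e f v) := by
  have hw := matFun_ne_zero heig hgap hM hm (hbr.le.trans hra) hv (hbr.trans_le hr)
  rw [le_rayleigh_iff heig hv] at hr
  have := sum_cross_nonneg_of_gap hgap (fun j => sq_nonneg ‖inner ℂ (e j) v‖) hm0 hm hbr.le hra hr
  simp only [← norm_inner_matFun_sq, sum_norm_inner_sq_mul_sub_eq heig] at this
  refine ⟨hw, (ritzLowerBound_le_iff (ritzLowerBound_denom_pos hM hm0 hbr hra)).2 ?_⟩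
  refine (mul_nonneg_iff_of_pos_left (pow_pos (norm_pos_iff.2 hw) 2)).1 ?_
  linarith

end MatFun

theorem head_or_tail_of_antitone {n t : ℕ} {lam : Fin n → ℝ} (hlam : Antitone lam)
    {f : ℝ → ℝ} {ν : ℝ} (ht : t < n) (ht1 : t - 1 < n)
    (htail : ∀ j : Fin n, t ≤ (j : ℕ) → |f (lam j)| ≤ ν)
    (hhead : ∀ j k : Fin n, (j : ℕ) ≤ (k : ℕ) → (k : ℕ) < t → |f (lam k)| ≤ |f (lam j)|)
    (j : Fin n) :
    (lam ⟨t - 1, ht1⟩ ≤ lam j ∧ |f (lam ⟨t - 1, ht1⟩)| ^ 2 ≤ f (lam j) ^ 2) ∨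
      (lam j ≤ lam ⟨t, ht⟩ ∧ f (lam j) ^ 2 ≤ ν ^ 2) := by
  rcases lt_or_ge (j : ℕ) t with hj | hj
  · refine Or.inl ⟨hlam (Fin.mk_le_mk.2 (by omega)), sq_le_sq.2 ?_⟩
    rw [abs_abs]
    exact hhead j _ (by simp only; omega) (by simp only; omega)
  · obtain ⟨hlo, hhi⟩ := abs_le.1 (htail j hj)
    exact Or.inr ⟨hlam (Fin.mk_le_mk.2 hj), sq_le_sq' hlo hhi⟩

/-- (Theorem 3.6.) If the `i`-th largest Ritz value `η_i` of `A`
in `𝒴` satisfies `η_i > λ_{t+1}` for some `t ∈ {i,…,n−p+i−1}` (encoded as `i ≤ t`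
and `t + p < n + i`) and `|f(λ₁)| ≥ ⋯ ≥ |f(λ_t)| > max_{j>t}|f(λ_j)| = ν_t`, then
`𝒴' = f(A)𝒴` has dimension at least `i` and its `i`-th largest Ritz value `η'_i`
satisfies: either `η'_i ≥ λ_t`, or
`0 < (λ_t − η'_i)/(η'_i − λ_{t+1}) ≤ (ν_t²/|f(λ_t)|²)·(λ_t − η_i)/(η_i − λ_{t+1})`.
(0-indexed: `lam ⟨j⟩` is `λ_{j+1}`.) -/
theorem stmt14 {n p i t : ℕ} (hi : 1 ≤ i) (hip : i ≤ p)
    (htn : t + p < n + i)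
    (A : Matrix (Fin n) (Fin n) ℂ)
    (lam : Fin n → ℝ) (hlam : Antitone lam)
    (x : Fin n → EuclideanSpace ℂ (Fin n)) (hx : Orthonormal ℂ x)
    (heig : ∀ j, Matrix.toEuclideanLin A (x j) = (lam j : ℂ) • x j)
    (Y : Submodule ℂ (EuclideanSpace ℂ (Fin n))) (hY : Module.finrank ℂ Y = p)
    (hηi : lam ⟨t, by omega⟩ < ritzValue A Y i)
    (f : ℝ → ℝ) (νt : ℝ)
    (hνt : IsGreatest ((fun j => |f (lam j)|) '' {j : Fin n | t ≤ (j : ℕ)}) νt)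
    (hmono : ∀ j k : Fin n, (j : ℕ) ≤ (k : ℕ) → (k : ℕ) < t →
      |f (lam k)| ≤ |f (lam j)|)
    (hgt : νt < |f (lam ⟨t - 1, by omega⟩)|) :
    i ≤ Module.finrank ℂ (Y.map (matFun lam x f)) ∧
    (lam ⟨t - 1, by omega⟩ ≤ ritzValue A (Y.map (matFun lam x f)) i ∨
      (0 < (lam ⟨t - 1, by omega⟩ - ritzValue A (Y.map (matFun lam x f)) i) /
          (ritzValue A (Y.map (matFun lam x f)) i - lam ⟨t, by omega⟩) ∧
        (lam ⟨t - 1, by omega⟩ - ritzValue A (Y.map (matFun lam x f)) i) /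
            (ritzValue A (Y.map (matFun lam x f)) i - lam ⟨t, by omega⟩) ≤
          νt ^ 2 / |f (lam ⟨t - 1, by omega⟩)| ^ 2 *
            ((lam ⟨t - 1, by omega⟩ - ritzValue A Y i) /
              (ritzValue A Y i - lam ⟨t, by omega⟩)))) := by
  obtain ⟨e, rfl⟩ := hx.exists_orthonormalBasis_coe_eq (by simp)
  set a := lam ⟨t - 1, by omega⟩
  set b := lam ⟨t, by omega⟩
  set η := ritzValue A Y i
  have hmM : νt ^ 2 < |f a| ^ 2 := by
    obtain ⟨j, -, hj⟩ := hνt.1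
    exact pow_lt_pow_left₀ hgt (hj ▸ abs_nonneg _) two_ne_zero
  have hM : 0 < |f a| ^ 2 := (sq_nonneg νt).trans_lt hmM
  have hba : b ≤ a := hlam (Fin.mk_le_mk.2 (by omega))
  have hgap := head_or_tail_of_antitone hlam (by omega) (by omega) (fun j hj => hνt.2 ⟨j, hj, rfl⟩)
    hmono
  have hiY : i ≤ Module.finrank ℂ Y := hY ▸ hip
  rcases lt_or_ge a η with hη | hη
  · obtain ⟨hdim, ha⟩ := le_ritzValue_map A hi hiY (r := (a + η) / 2) (by linarith)
      fun v hv hr => matFun_ne_zero_and_le_rayleigh heig hgap hM hmM.le hba hv (by linarith)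
    exact ⟨hdim, Or.inl ha⟩
  · have key : ∀ s, b < s → s < η → i ≤ Module.finrank ℂ (Y.map (matFun lam e f)) ∧
        ritzLowerBound (νt ^ 2) (|f a| ^ 2) a b s ≤ ritzValue A (Y.map (matFun lam e f)) i :=
      fun s hbs hsη => le_ritzValue_map A hi hiY hsη fun v hv hr =>
        matFun_ne_zero_and_ritzLowerBound_le heig hgap hM (sq_nonneg νt) hmM.le hbs
          (by linarith) hv hr
    refine ⟨(key _ (left_lt_add_div_two.2 hηi) (add_div_two_lt_right.2 hηi)).1,
      ratio_le_of_ritzLowerBound_le (sq_nonneg νt) hmM hηi hη ?_⟩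
    exact ritzLowerBound_le_of_forall_lt hM (sq_nonneg νt) hηi hη fun s hbs hsη => (key s hbs hsη).2
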